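/- arXiv:1902.09942 — 4 statements merged into one kernel-verified Lean document; each statement's English description precedes it below -/
import Mathlib

section
/- There is exactly one polynomial R in two variables with rational coefficients of total degree at most 3 satisfying all of the following: (i) R(a,b) = −R(1−a,−b) for all rational a, b; (ii) R(2x, 2x+y) − R(2x−1, 2x+y−2) = −4x² + 12xy − 9y² + 4x − 6y − 1 for all rational x, y; (iii) R(0,0) = −1; (iv) R(0,1) = −19. This polynomial is R(x,y) = (28/3)x³ − 22x²y + 17xy² − (13/3)y³ − 14x² + 22xy − (17/2)y² + (20/3)x − (31/6)y − 1. -/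
/-!
If `R` and `S` both satisfy the four conditions, then `D = R - S` satisfies their homogeneous
versions. The recursion says that `D` is periodic along `(1, 2)`. Restricted to a line of
direction `(1, 2)`, `D` is a univariate polynomial taking the same value at infinitely many points,
hence constant; so `D (a, b) = g (b - 2a)` with `g = D (0, ·)` of degree at most `3`. Besides the
zeros `0` and `1` of `g`, the symmetry and the periodicity give `g (-2) = -D (1, 2) = -D (0, 0) = 0`
and likewise `g (-3) = 0`: four zeros, so `g = 0` and `D = 0`.
-/

open MvPolynomial

/-- The polynomial `R_(X,L)` of the 4-dimensional scroll. -/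
noncomputable def Rspec : MvPolynomial (Fin 2) ℚ :=
  C (28/3) * X 0 ^ 3 - C 22 * X 0 ^ 2 * X 1 + C 17 * X 0 * X 1 ^ 2 - C (13/3) * X 1 ^ 3
    - C 14 * X 0 ^ 2 + C 22 * X 0 * X 1 - C (17/2) * X 1 ^ 2
    + C (20/3) * X 0 - C (31/6) * X 1 - 1

namespace MvPolynomial

variable {σ K : Type*} [CommRing K]

noncomputable def restrictToLine (p : MvPolynomial σ K) (x v : σ → K) : Polynomial K :=
  aeval (fun i => Polynomial.C (v i) * Polynomial.X + Polynomial.C (x i)) p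

theorem eval_restrictToLine (p : MvPolynomial σ K) (x v : σ → K) (t : K) :
    (p.restrictToLine x v).eval t = eval (x + t • v) p := by
  rw [restrictToLine, ← Polynomial.coe_aeval_eq_eval, comp_aeval_apply, ← aeval_eq_eval]
  congr 2
  funext i
  simp only [map_add, map_mul, Polynomial.aeval_C, Polynomial.aeval_X, Pi.add_apply,
    Pi.smul_apply, smul_eq_mul, Algebra.algebraMap_self, RingHom.id_apply]
  ring

theorem natDegree_restrictToLine_le (p : MvPolynomial σ K) (x v : σ → K) :
    (p.restrictToLine x v).natDegree ≤ p.totalDegree := by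
  conv_lhs => rw [restrictToLine, p.as_sum, map_sum]
  refine Polynomial.natDegree_sum_le_of_forall_le _ _ fun m hm => ?_
  rw [aeval_monomial]
  refine (Polynomial.natDegree_C_mul_le _ _).trans ?_
  refine (Polynomial.natDegree_prod_le _ _).trans ?_
  refine (Finset.sum_le_sum fun i _ => ?_).trans (le_totalDegree hm)
  exact (Polynomial.natDegree_pow_le_of_le _ Polynomial.natDegree_linear_le).trans_eq (mul_one _)

variable [IsDomain K]

theorem eval_add_smul_eq_of_periodic [CharZero K] {p : MvPolynomial σ K} {v : σ → K}
    (hp : Function.Periodic (fun y => eval y p) v) (x : σ → K) (t : K) :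
    eval (x + t • v) p = eval x p := by
  have hnat : ∀ n : ℕ, eval (x + (n : K) • v) p = eval x p := by
    intro n
    induction n with
    | zero => simp
    | succ n ih => rw [Nat.cast_succ, add_smul, one_smul, ← add_assoc]; exact (hp _).trans ih
  have hconst : p.restrictToLine x v = Polynomial.C (eval x p) := by
    refine Polynomial.eq_of_infinite_eval_eq _ _ ?_
    refine Set.infinite_of_injective_forall_mem Nat.cast_injective fun n => ?_
    simp [eval_restrictToLine, hnat]
  rw [← eval_restrictToLine, hconst, Polynomial.eval_C]

theorem eval_add_smul_eq_zero_of_totalDegree_lt_card {p : MvPolynomial σ K} {x v : σ → K}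
    (s : Finset K) (hs : ∀ t ∈ s, eval (x + t • v) p = 0) (hcard : p.totalDegree < s.card)
    (t : K) : eval (x + t • v) p = 0 := by
  have hzero : p.restrictToLine x v = 0 :=
    Polynomial.eq_zero_of_natDegree_lt_card_of_eval_eq_zero' _ s
      (by simpa only [eval_restrictToLine] using hs)
      ((natDegree_restrictToLine_le p x v).trans_lt hcard)
  rw [← eval_restrictToLine, hzero, Polynomial.eval_zero]

end MvPolynomial

def IsScrollRPolynomial (R : MvPolynomial (Fin 2) ℚ) : Prop :=
  R.totalDegree ≤ 3 ∧
    (∀ a b : ℚ, eval ![a, b] R = -eval ![1 - a, -b] R) ∧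
    (∀ x y : ℚ, eval ![2*x, 2*x + y] R - eval ![2*x - 1, 2*x + y - 2] R
      = -4*x^2 + 12*x*y - 9*y^2 + 4*x - 6*y - 1) ∧
    eval ![0, 0] R = -1 ∧
    eval ![0, 1] R = -19

theorem eq_zero_of_periodic_of_antisymm {D : MvPolynomial (Fin 2) ℚ} (hdeg : D.totalDegree ≤ 3)
    (hsym : ∀ a b : ℚ, eval ![a, b] D = -eval ![1 - a, -b] D)
    (hper : Function.Periodic (fun y => eval y D) ![1, 2])
    (h00 : eval ![0, 0] D = 0) (h01 : eval ![0, 1] D = 0) : D = 0 := by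
  have hshift : ∀ a b : ℚ, eval ![a + 1, b + 2] D = eval ![a, b] D := by
    intro a b
    simpa using hper ![a, b]
  have hvert : ∀ w : ℚ, eval ![0, w] D = 0 := by
    have hpt : ∀ t : ℚ, ![0, 0] + t • ![0, 1] = ![0, t] := fun t => by simp
    have h12 : eval ![0, -2] D = 0 :=
      calc eval ![0, -2] D = -eval ![0 + 1, 0 + 2] D := by rw [hsym]; norm_num
        _ = 0 := by rw [hshift, h00, neg_zero]
    have h13 : eval ![0, -3] D = 0 :=
      calc eval ![0, -3] D = -eval ![0 + 1, 1 + 2] D := by rw [hsym]; norm_num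
        _ = 0 := by rw [hshift, h01, neg_zero]
    intro w
    rw [← hpt]
    refine eval_add_smul_eq_zero_of_totalDegree_lt_card {0, 1, -2, -3} ?_
      (hdeg.trans_lt (by decide)) w
    simp only [Finset.mem_insert, Finset.mem_singleton, hpt]
    rintro t (rfl | rfl | rfl | rfl) <;> assumption
  refine MvPolynomial.funext fun y => ?_
  have hy : y = ![0, y 1 - 2 * y 0] + y 0 • ![1, 2] := by
    ext i; fin_cases i <;> simp; ring
  rw [hy, eval_add_smul_eq_of_periodic hper, hvert, map_zero]

theorem isScrollRPolynomial_Rspec : IsScrollRPolynomial Rspec := by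
  have heval : ∀ a b : ℚ, eval ![a, b] Rspec = 28/3 * a ^ 3 - 22 * a ^ 2 * b + 17 * a * b ^ 2
      - 13/3 * b ^ 3 - 14 * a ^ 2 + 22 * a * b - 17/2 * b ^ 2 + 20/3 * a - 31/6 * b - 1 := by
    simp [Rspec]
  refine ⟨?_, fun a b => ?_, fun x y => ?_, ?_, ?_⟩
  · rw [← mem_restrictTotalDegree]
    unfold Rspec
    apply_rules [sub_mem, add_mem]
    all_goals rw [mem_restrictTotalDegree]
    all_goals simp [totalDegree_mul_of_isDomain, X_ne_zero]
  all_goals simp only [heval]; ring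

theorem IsScrollRPolynomial.eq {R S : MvPolynomial (Fin 2) ℚ} (hR : IsScrollRPolynomial R)
    (hS : IsScrollRPolynomial S) : R = S := by
  obtain ⟨hdegR, hsymR, hrecR, h00R, h01R⟩ := hR
  obtain ⟨hdegS, hsymS, hrecS, h00S, h01S⟩ := hS
  rw [← sub_eq_zero]
  refine eq_zero_of_periodic_of_antisymm ((totalDegree_sub R S).trans (max_le hdegR hdegS))
    (fun a b => ?_) (fun y => ?_) (by simp [h00R, h00S]) (by simp [h01R, h01S])
  · simp only [map_sub, hsymR a b, hsymS a b]
    ring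
  · have hR := hrecR ((y 0 + 1) / 2) (y 1 - y 0 + 1)
    have hS := hrecS ((y 0 + 1) / 2) (y 1 - y 0 + 1)
    have hshifted :
        ![2 * ((y 0 + 1) / 2), 2 * ((y 0 + 1) / 2) + (y 1 - y 0 + 1)] = y + ![1, 2] := by
      ext i; fin_cases i <;> simp <;> ring
    have hunshifted :
        ![2 * ((y 0 + 1) / 2) - 1, 2 * ((y 0 + 1) / 2) + (y 1 - y 0 + 1) - 2] = y := by
      ext i; fin_cases i <;> simp <;> ring
    rw [hshifted, hunshifted] at hR hS
    simp only [map_sub]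
    linarith

theorem unique_R_polynomial (R : MvPolynomial (Fin 2) ℚ) :
    (R.totalDegree ≤ 3 ∧
      (∀ a b : ℚ, eval ![a, b] R = -eval ![1 - a, -b] R) ∧
      (∀ x y : ℚ, eval ![2*x, 2*x + y] R - eval ![2*x - 1, 2*x + y - 2] R
        = -4*x^2 + 12*x*y - 9*y^2 + 4*x - 6*y - 1) ∧
      eval ![0, 0] R = -1 ∧
      eval ![0, 1] R = -19) ↔ R = Rspec :=
  ⟨fun hR => IsScrollRPolynomial.eq hR isScrollRPolynomial_Rspec,
    fun h => h ▸ isScrollRPolynomial_Rspec⟩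
end

section
/- For integers a and r, the 2×6 matrix over the rationals with first row (−56, 12(4a − r), −6(2a² − r²), a³ − r³, 2, r − a) and second row (28, −66, 51, −13, −1, 1) has rank 1 if and only if a = 3 and r = 1. -/
/-! The second row is nonzero, so the matrix has rank one exactly when the first row is `c` times
the second. The last column forces `c = r - a`, the first `c = -2`, and the second then gives
`4a - r = 11`; hence `a = 3`, `r = 1`, and for these values the remaining columns agree. -/

open Module Submodule

theorem finrank_span_pair_eq_one_iff {K V : Type*} [DivisionRing K] [AddCommGroup V] [Module K V]
    {u w : V} (hw : w ≠ 0) : finrank K (span K {u, w}) = 1 ↔ u ∈ K ∙ w := by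
  have : FiniteDimensional K (span K {u, w}) := .span_of_finite K (Set.toFinite _)
  constructor
  · intro h
    have hle : K ∙ w ≤ span K {u, w} := span_mono (by simp)
    rw [eq_of_le_of_finrank_eq hle (by rw [h, finrank_span_singleton hw])]
    exact subset_span (by simp)
  · intro hu
    rw [span_insert_eq_span hu, finrank_span_singleton hw]

theorem Matrix.rank_of_two_rows_eq_one_iff {K n : Type*} [Field K] [Fintype n]
    {u w : n → K} (hw : w ≠ 0) : (Matrix.of ![u, w]).rank = 1 ↔ ∃ c : K, c • w = u := by
  rw [rank_eq_finrank_span_row]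
  change finrank K (span K (Set.range ![u, w])) = 1 ↔ _
  rw [range_cons_cons_empty, finrank_span_pair_eq_one_iff hw, mem_span_singleton]

theorem coefficient_matrix_rank (a r : ℤ) :
    (!![(-56 : ℚ), 12*(4*(a:ℚ) - (r:ℚ)), -6*(2*(a:ℚ)^2 - (r:ℚ)^2), (a:ℚ)^3 - (r:ℚ)^3, 2, (r:ℚ) - (a:ℚ);
        28, -66, 51, -13, -1, 1]).rank = 1 ↔ a = 3 ∧ r = 1 := by
  rw [Matrix.rank_of_two_rows_eq_one_iff (by simp [funext_iff, Fin.forall_fin_succ])]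
  simp only [Matrix.smul_cons, smul_eq_mul, mul_neg, mul_one, Matrix.smul_empty, neg_mul, funext_iff,
    Nat.succ_eq_add_one, Nat.reduceAdd, Fin.forall_fin_succ, Fin.isValue, Matrix.cons_val_zero,
    Matrix.cons_val_succ, Matrix.cons_val_fin_one, forall_const, ↓existsAndEq, neg_sub, and_true]
  constructor
  · rintro ⟨h₀, h₁, -⟩
    have ha : (a : ℚ) = 3 := by linarith
    have hr : (r : ℚ) = 1 := by linarith
    exact ⟨mod_cast ha, mod_cast hr⟩
  · rintro ⟨rfl, rfl⟩
    norm_num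
end

section
/- Let a and r be rational numbers. There exists a nonzero rational number c such that (1/6)(−56u³ + 12(4a − r)u²v − 6(2a² − r²)uv² + (a³ − r³)v³ + 2u − (a − r)v) = c·(1/3)(28u³ − 66u²v + 51uv² − 13v³ − u + v) for all rational u and v if and only if a = 3 and r = 1; in that case c = −1. -/
/-! Evaluating at `(u, v) = (1, 0)` forces `c = -1`. The sum `p + φ` of the two sides then has
no `u³` and no `u` term, and its `u²v` and `v` coefficients are `2 (4a - r - 11)` and
`-(a - r - 2)/6`; their vanishing is a linear system with the single solution `a = 3, r = 1`. -/

/-- `p_(Y,M)(1/2 + u, v)` for `Y` the blow-up of `ℙ³` at a point and `M = a h - r e`. -/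
def blowupHilbertPoly (a r u v : ℚ) : ℚ :=
  (1/6) * (-56*u^3 + 12*(4*a - r)*u^2*v - 6*(2*a^2 - r^2)*u*v^2 + (a^3 - r^3)*v^3
    + 2*u - (a - r)*v)

def scrollResidualCubic (u v : ℚ) : ℚ :=
  (1/3) * (28*u^3 - 66*u^2*v + 51*u*v^2 - 13*v^3 - u + v)

lemma blowupHilbertPoly_add_scrollResidualCubic (a r u v : ℚ) :
    blowupHilbertPoly a r u v + scrollResidualCubic u v =
      2*(4*a - r - 11)*u^2*v + -(2*a^2 - r^2 - 17)*u*v^2 + (a^3 - r^3 - 26)/6*v^3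
        + -(a - r - 2)/6*v := by
  unfold blowupHilbertPoly scrollResidualCubic
  ring

lemma blowupHilbertPoly_three_one (u v : ℚ) :
    blowupHilbertPoly 3 1 u v = -scrollResidualCubic u v := by
  unfold blowupHilbertPoly scrollResidualCubic
  ring

lemma coeff_eq_zero_of_forall_eq_zero {K : Type*} [Field K] [LinearOrder K] [IsStrictOrderedRing K]
    {A B C D : K} (h : ∀ u v : K, A*u^2*v + B*u*v^2 + C*v^3 + D*v = 0) :
    A = 0 ∧ B = 0 ∧ C = 0 ∧ D = 0 := by
  have h₁ := h 1 1
  have h₂ := h 1 (-1)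
  have h₃ := h 0 1
  have h₄ := h 0 2
  norm_num at h₁ h₂ h₃ h₄
  refine ⟨?_, ?_, ?_, ?_⟩ <;> linarith

lemma eq_neg_one_of_forall_blowupHilbertPoly_eq {a r c : ℚ}
    (h : ∀ u v, blowupHilbertPoly a r u v = c * scrollResidualCubic u v) : c = -1 := by
  have h₁₀ := h 1 0
  norm_num [blowupHilbertPoly, scrollResidualCubic] at h₁₀
  linarith

lemma eq_three_one_of_forall_blowupHilbertPoly_eq_neg {a r : ℚ}
    (h : ∀ u v, blowupHilbertPoly a r u v = -scrollResidualCubic u v) : a = 3 ∧ r = 1 := by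
  obtain ⟨hA, -, -, hD⟩ := coeff_eq_zero_of_forall_eq_zero fun u v => by
    rw [← blowupHilbertPoly_add_scrollResidualCubic, h, neg_add_cancel]
  constructor <;> linarith

theorem proportional_iff (a r : ℚ) :
    ((∃ c : ℚ, c ≠ 0 ∧ ∀ u v : ℚ,
        (1/6) * (-56*u^3 + 12*(4*a - r)*u^2*v - 6*(2*a^2 - r^2)*u*v^2 + (a^3 - r^3)*v^3
          + 2*u - (a - r)*v)
        = c * ((1/3) * (28*u^3 - 66*u^2*v + 51*u*v^2 - 13*v^3 - u + v)))
      ↔ (a = 3 ∧ r = 1)) ∧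
    (∀ c : ℚ, a = 3 → r = 1 →
      (∀ u v : ℚ,
        (1/6) * (-56*u^3 + 12*(4*a - r)*u^2*v - 6*(2*a^2 - r^2)*u*v^2 + (a^3 - r^3)*v^3
          + 2*u - (a - r)*v)
        = c * ((1/3) * (28*u^3 - 66*u^2*v + 51*u*v^2 - 13*v^3 - u + v))) → c = -1) := by
  refine ⟨⟨?_, ?_⟩, fun c _ _ h => eq_neg_one_of_forall_blowupHilbertPoly_eq h⟩
  · rintro ⟨c, -, h⟩
    obtain rfl := eq_neg_one_of_forall_blowupHilbertPoly_eq h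
    exact eq_three_one_of_forall_blowupHilbertPoly_eq_neg fun u v => (h u v).trans (neg_one_mul _)
  · rintro ⟨rfl, rfl⟩
    exact ⟨-1, by norm_num, fun u v => (blowupHilbertPoly_three_one u v).trans (neg_one_mul _).symm⟩
end

section
/- For every positive rational number a there is no nonzero rational number c such that (1/6)(av − 4u − 1)(av − 4u)(av − 4u + 1) = c·(1/3)(28u³ − 66u²v + 51uv² − 13v³ − u + v) for all rational u and v. -/
/-! Comparing both sides at `(u, v) = (1, 0)` forces `c = -10/9`. The cubic on the right vanishes at
`(1, 1)`, so `(a - 5)(a - 4)(a - 3) = 0`, while `(0, 1)` gives `(a - 1) a (a + 1) = 80/3`;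
no `a ∈ {3, 4, 5}` satisfies the latter. -/

theorem not_hilbert_curve_of_P3_general (a : ℚ) :
    ¬ ∃ c : ℚ, c ≠ 0 ∧ ∀ u v : ℚ,
      (1/6) * (a*v - 4*u - 1) * (a*v - 4*u) * (a*v - 4*u + 1)
        = c * ((1/3) * (28*u^3 - 66*u^2*v + 51*u*v^2 - 13*v^3 - u + v)) := by
  rintro ⟨c, -, h⟩
  have hc : c = -10/9 := by linarith [h 1 0]
  subst hc
  have h_diag : (a - 5) * (a - 4) * (a - 3) = 0 := by linarith [h 1 1]
  have h_axis : (a - 1) * a * (a + 1) = 80/3 := by linarith [h 0 1]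
  have h_root : a = 5 ∨ a = 4 ∨ a = 3 := by
    simpa only [mul_eq_zero, sub_eq_zero, or_assoc] using h_diag
  rcases h_root with rfl | rfl | rfl <;> norm_num at h_axis

theorem not_hilbert_curve_of_P3 (a : ℚ) (ha : 0 < a) :
    ¬ ∃ c : ℚ, c ≠ 0 ∧ ∀ u v : ℚ,
      (1/6) * (a*v - 4*u - 1) * (a*v - 4*u) * (a*v - 4*u + 1)
        = c * ((1/3) * (28*u^3 - 66*u^2*v + 51*u*v^2 - 13*v^3 - u + v)) :=
  not_hilbert_curve_of_P3_general a
end
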